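/- arXiv:0910.4695 — 3 statements merged into one kernel-verified Lean document; each statement's English description precedes it below -/
import Mathlib

section
/- If a semi-direct product of the form (Z/ℓZ)^b ⋊ Z/pZ is a quasi-p group, then b ≥ ord_p(ℓ), the multiplicative order of ℓ modulo p. -/
/-!
Write `N = (ℤ/ℓ)^b` multiplicatively and let `ν = ∏ₛ ι s` be the norm endomorphism of `N`.
Since `ν ∘ ι s = ν`, the map `g ↦ ν g.left` is a homomorphism `N ⋊ ℤ/p → N`. Its target has
exponent `ℓ`, prime to `p`, so it kills every Sylow `p`-subgroup, hence the whole quasi-`p` group: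
`ν = 1`. A point `x` fixed by `ℤ/p` then satisfies `x ^ p = ν x = 1` and `x ^ ℓ = 1`, so `x = 1`.
Counting fixed points of the `p`-group `ℤ/p` acting on `N` gives `ℓ ^ b ≡ 1 [MOD p]`.
-/

open MulAction

theorem IsPGroup.le_ker_of_pow_eq_one {p ℓ : ℕ} {G M : Type*} [Group G] [Monoid M] (f : G →* M)
    (hM : ∀ m : M, m ^ ℓ = 1) (hpℓ : p.Coprime ℓ) {P : Subgroup G} (hP : IsPGroup p P) :
    P ≤ f.ker := by
  intro g hg
  obtain ⟨k, hk⟩ := hP ⟨g, hg⟩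
  have hgk : g ^ p ^ k = 1 := by simpa using congrArg Subtype.val hk
  refine (pow_eq_one_iff_of_coprime (hpℓ.pow_left k)).mp ⟨?_, hM _⟩
  rw [← map_pow, hgk, map_one]

theorem MonoidHom.eq_one_of_iSup_sylow_eq_top {p ℓ : ℕ} {G M : Type*} [Group G] [Monoid M]
    (hG : ⨆ P : Sylow p G, (P : Subgroup G) = ⊤) (f : G →* M) (hM : ∀ m : M, m ^ ℓ = 1)
    (hpℓ : p.Coprime ℓ) (g : G) : f g = 1 := by
  have hker : (⊤ : Subgroup G) ≤ f.ker :=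
    hG ▸ iSup_le fun P => IsPGroup.le_ker_of_pow_eq_one f hM hpℓ P.isPGroup'
  exact hker (Subgroup.mem_top g)

theorem IsPGroup.card_modEq_one_of_fixedPoints_eq_singleton {p : ℕ} [Fact p.Prime] {G α : Type*}
    [Group G] [MulAction G α] [Finite α] (hG : IsPGroup p G) {a : α}
    (ha : fixedPoints G α = {a}) : Nat.card α ≡ 1 [MOD p] := by
  have hmod := hG.card_modEq_card_fixedPoints α
  rwa [ha, Nat.card_unique (α := ({a} : Set α))] at hmod

namespace MulAut

variable {N H : Type*} [CommGroup N] [Group H] [Fintype H] (ι : H →* MulAut N)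

def normHom : N →* N := ∏ h, (ι h : N →* N)

theorem normHom_apply (n : N) : normHom ι n = ∏ h, ι h n :=
  MonoidHom.finsetProd_apply _ _ _

theorem normHom_apply_apply (h : H) (n : N) : normHom ι (ι h n) = normHom ι n := by
  simp only [normHom_apply, ← MulAut.mul_apply, ← map_mul]
  exact Equiv.prod_comp (Equiv.mulRight h) (fun t => ι t n)

theorem normHom_eq_pow_of_forall_apply_eq {x : N} (hx : ∀ h, ι h x = x) :
    normHom ι x = x ^ Fintype.card H := by
  rw [normHom_apply, Finset.prod_congr rfl fun h _ => hx h, Finset.prod_const, Finset.card_univ]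

def semidirectNormHom : N ⋊[ι] H →* N where
  toFun g := normHom ι g.left
  map_one' := map_one _
  map_mul' a c := by
    rw [SemidirectProduct.mul_left, map_mul, normHom_apply_apply]

@[simp]
theorem semidirectNormHom_inl (n : N) :
    semidirectNormHom ι (SemidirectProduct.inl n) = normHom ι n :=
  rfl

theorem fixedPoints_eq_singleton_one {ℓ : ℕ} (hN : ∀ n : N, n ^ ℓ = 1)
    (hℓ : (Fintype.card H).Coprime ℓ) (hnorm : ∀ n, normHom ι n = 1) :
    letI := MulAction.compHom N ι
    fixedPoints H N = {1} := by
  ext x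
  refine ⟨fun hx => ?_, fun hx h => ?_⟩
  · have hpow : x ^ Fintype.card H = 1 := by
      rw [← normHom_eq_pow_of_forall_apply_eq ι hx, hnorm]
    exact (pow_eq_one_iff_of_coprime hℓ).mp ⟨hpow, hN x⟩
  · rw [Set.mem_singleton_iff.mp hx]
    exact map_one (ι h)

end MulAut

/-- If a semidirect product `(Z/ℓZ)^b ⋊ Z/pZ` is a quasi-`p` group, then
`b ≥ ord_p(ℓ)`, the multiplicative order of `ℓ` modulo `p`. -/
theorem stmt_5 (p ℓ b : ℕ) [Fact p.Prime] [Fact ℓ.Prime] (hne : p ≠ ℓ) (hb : 0 < b)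
    (ι : Multiplicative (ZMod p) →* MulAut (Multiplicative (Fin b → ZMod ℓ)))
    (hquasi : (⨆ P : Sylow p (Multiplicative (Fin b → ZMod ℓ) ⋊[ι] Multiplicative (ZMod p)),
        (P : Subgroup (Multiplicative (Fin b → ZMod ℓ) ⋊[ι] Multiplicative (ZMod p)))) = ⊤) :
    orderOf (ℓ : ZMod p) ≤ b := by
  have hpℓ : p.Coprime ℓ := (Nat.coprime_primes Fact.out Fact.out).mpr hne
  have hcard : Fintype.card (Multiplicative (ZMod p)) = p := by
    rw [Fintype.card_multiplicative, ZMod.card]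
  have hexp (n : Multiplicative (Fin b → ZMod ℓ)) : n ^ ℓ = 1 :=
    Multiplicative.toAdd.injective (ZModModule.char_nsmul_eq_zero ℓ n.toAdd)
  have hnorm (n) : MulAut.normHom ι n = 1 := by
    rw [← MulAut.semidirectNormHom_inl]
    exact (MulAut.semidirectNormHom ι).eq_one_of_iSup_sylow_eq_top hquasi hexp hpℓ _
  have hpgroup : IsPGroup p (Multiplicative (ZMod p)) :=
    IsPGroup.of_card (n := 1) (by simp [Nat.card_eq_fintype_card, hcard])
  let _ := MulAction.compHom (Multiplicative (Fin b → ZMod ℓ)) ι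
  have hmod := hpgroup.card_modEq_one_of_fixedPoints_eq_singleton
    (MulAut.fixedPoints_eq_singleton_one ι hexp (hcard.symm ▸ hpℓ) hnorm)
  have hpow : (ℓ : ZMod p) ^ b = 1 := by
    rw [Nat.card_eq_fintype_card] at hmod
    simpa using (ZMod.natCast_eq_natCast_iff _ _ _).mpr hmod
  exact Nat.le_of_dvd hb (orderOf_dvd_of_pow_eq_one hpow)
end

section
/- Let p and ℓ be distinct primes and a = ord_p(ℓ). Any semi-direct product G = (Z/ℓZ)^a ⋊_ι Z/pZ with ι injective is a quasi-p group, i.e., G is generated by its Sylow p-subgroups. -/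
/-!
The subgroup generated by the Sylow `p`-subgroups is characteristic, hence normal, and it contains
the complement `Z/pZ`, in particular `σ = ofAdd 1`. The `p`-group `⟨ι σ⟩` acting on `V = (Z/ℓZ)^a`
has `|V| ≡ |V^σ| (mod p)`; writing `|V^σ| = ℓ^β` this says `ℓ^β ≡ 1 (mod p)`, so `a ∣ β ≤ a`.
Injectivity of `ι` excludes `β = a`, so `ι σ` is fixed-point-free. On the finite group `V` the map
`u ↦ u / ι σ u` is then bijective, and `u / ι σ u` is the commutator `[u, σ]` in the semidirect
product, which lies in the normal subgroup; so that subgroup contains both factors.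
-/

open MonoidHom Multiplicative

instance Sylow.characteristic_iSup (p : ℕ) (G : Type*) [Group G] :
    (⨆ P : Sylow p G, (P : Subgroup G)).Characteristic := by
  refine Subgroup.characteristic_iff_map_le.mpr fun ϕ => ?_
  rw [Subgroup.map_iSup]
  exact iSup_le fun P => le_iSup_of_le (ϕ • P) le_rfl

theorem FixedPoints.subgroup_eq_bot_or_eq_top {p ℓ : ℕ} [Fact p.Prime] [Fact ℓ.Prime]
    {H V : Type*} [Group H] [Group V] [Finite V] [MulDistribMulAction H V] (hH : IsPGroup p H)
    (hV : Nat.card V = ℓ ^ orderOf (ℓ : ZMod p)) :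
    FixedPoints.subgroup H V = ⊥ ∨ FixedPoints.subgroup H V = ⊤ := by
  set F := FixedPoints.subgroup H V
  obtain ⟨β, hβ, hF⟩ := (Nat.dvd_prime_pow Fact.out).mp (hV ▸ F.card_subgroup_dvd_card)
  have hmod : ℓ ^ orderOf (ℓ : ZMod p) ≡ ℓ ^ β [MOD p] :=
    hV ▸ hF ▸ hH.card_modEq_card_fixedPoints V
  have hβ1 : (ℓ : ZMod p) ^ β = 1 := by
    rw [← pow_orderOf_eq_one (ℓ : ZMod p)]
    exact_mod_cast ((ZMod.natCast_eq_natCast_iff _ _ _).mpr hmod).symm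
  rcases Nat.eq_zero_or_pos β with rfl | hβpos
  · exact .inl (Subgroup.card_eq_one.mp (by rw [hF, pow_zero]))
  · refine .inr ((Subgroup.card_eq_iff_eq_top F).mp ?_)
    rw [hF, hV, le_antisymm hβ (orderOf_le_of_pow_eq_one hβpos hβ1)]

theorem MulAut.fixedPointFree_of_pow_eq_one {p ℓ : ℕ} [Fact p.Prime] [Fact ℓ.Prime]
    {V : Type*} [Group V] [Finite V] (hV : Nat.card V = ℓ ^ orderOf (ℓ : ZMod p))
    {f : MulAut V} (hfp : f ^ p = 1) (hf : f ≠ 1) : FixedPointFree f := by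
  have hP : IsPGroup p (Subgroup.zpowers f) :=
    IsPGroup.of_card (n := 1) (by rw [Nat.card_zpowers, orderOf_eq_prime hfp hf, pow_one])
  rcases FixedPoints.subgroup_eq_bot_or_eq_top hP hV with h | h
  · intro y hy
    have hfix : y ∈ FixedPoints.subgroup (Subgroup.zpowers f) V := by
      rintro ⟨_, j, rfl⟩
      exact MulAction.mem_fixedBy_zpow (α := V) (g := f) hy j
    rwa [h, Subgroup.mem_bot] at hfix
  · refine absurd (MulEquiv.ext fun y => ?_) hf
    exact (h ▸ Subgroup.mem_top y : y ∈ FixedPoints.subgroup _ V) ⟨f, Subgroup.mem_zpowers f⟩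

namespace SemidirectProduct

variable {N G : Type*} [Group N] [Group G] {φ : G →* MulAut N}

theorem inl_commutatorMap (n : N) (g : G) :
    (inl (commutatorMap (φ g) n) : N ⋊[φ] G) = inl n * inr g * (inl n)⁻¹ * (inr g)⁻¹ := by
  ext <;> simp [div_eq_mul_inv]

theorem range_inl_le_of_fixedPointFree [Finite N] {K : Subgroup (N ⋊[φ] G)} [K.Normal] {g : G}
    (hg : inr g ∈ K) (hφ : FixedPointFree (φ g)) : inl.range ≤ K := by
  rintro _ ⟨n, rfl⟩
  obtain ⟨m, rfl⟩ := hφ.commutatorMap_surjective n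
  rw [inl_commutatorMap]
  exact K.mul_mem (‹K.Normal›.conj_mem _ hg _) (K.inv_mem hg)

theorem eq_top_of_range_inl_le_of_range_inr_le {K : Subgroup (N ⋊[φ] G)} (hN : inl.range ≤ K)
    (hG : inr.range ≤ K) : K = ⊤ :=
  eq_top_iff.mpr fun x _ => inl_left_mul_inr_right x ▸ K.mul_mem (hN ⟨_, rfl⟩) (hG ⟨_, rfl⟩)

theorem iSup_sylow_eq_top_of_fixedPointFree {p : ℕ} [Finite N] (hG : IsPGroup p G) {g : G}
    (hφ : FixedPointFree (φ g)) : ⨆ P : Sylow p (N ⋊[φ] G), (P : Subgroup (N ⋊[φ] G)) = ⊤ := by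
  obtain ⟨Q, hQ⟩ := (hG.of_surjective _ (inr (φ := φ)).rangeRestrict_surjective).exists_le_sylow
  have hinr : inr.range ≤ ⨆ P : Sylow p (N ⋊[φ] G), (P : Subgroup (N ⋊[φ] G)) :=
    hQ.trans (le_iSup _ Q)
  exact eq_top_of_range_inl_le_of_range_inr_le (range_inl_le_of_fixedPointFree (hinr ⟨g, rfl⟩) hφ) hinr

end SemidirectProduct

theorem stmt_7_general (p ℓ a : ℕ) [Fact p.Prime] [Fact ℓ.Prime]
    (ha : a = orderOf (ℓ : ZMod p))
    (ι : Multiplicative (ZMod p) →* MulAut (Multiplicative (Fin a → ZMod ℓ)))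
    (hι : Function.Injective ι) :
    (⨆ P : Sylow p (Multiplicative (Fin a → ZMod ℓ) ⋊[ι] Multiplicative (ZMod p)),
        (P : Subgroup (Multiplicative (Fin a → ZMod ℓ) ⋊[ι] Multiplicative (ZMod p)))) = ⊤ := by
  have hV : Nat.card (Multiplicative (Fin a → ZMod ℓ)) = ℓ ^ orderOf (ℓ : ZMod p) := by
    simp [ha]
  have hH : IsPGroup p (Multiplicative (ZMod p)) := IsPGroup.of_card (n := 1) (by simp)
  have hσp : ι (ofAdd 1) ^ p = 1 := by
    rw [← map_pow, ← ofAdd_nsmul, nsmul_one, ZMod.natCast_self, ofAdd_zero, map_one]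
  have hσ : ι (ofAdd 1) ≠ 1 := by
    rw [← map_one ι, hι.ne_iff, ne_eq, ofAdd_eq_one]
    exact one_ne_zero
  exact SemidirectProduct.iSup_sylow_eq_top_of_fixedPointFree hH
    (MulAut.fixedPointFree_of_pow_eq_one hV hσp hσ)

/-- For distinct primes `p ≠ ℓ` with `a = ord_p(ℓ)`, any semidirect product
`(Z/ℓZ)^a ⋊_ι Z/pZ` with `ι` injective is a quasi-`p` group. -/
theorem stmt_7 (p ℓ a : ℕ) [Fact p.Prime] [Fact ℓ.Prime] (hne : p ≠ ℓ)
    (ha : a = orderOf (ℓ : ZMod p))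
    (ι : Multiplicative (ZMod p) →* MulAut (Multiplicative (Fin a → ZMod ℓ)))
    (hι : Function.Injective ι) :
    (⨆ P : Sylow p (Multiplicative (Fin a → ZMod ℓ) ⋊[ι] Multiplicative (ZMod p)),
        (P : Subgroup (Multiplicative (Fin a → ZMod ℓ) ⋊[ι] Multiplicative (ZMod p)))) = ⊤ :=
  stmt_7_general p ℓ a ha ι hι
end

section
/- Let p and ℓ be distinct primes with p dividing |GL_a(F_ℓ)| where a = ord_p(ℓ). If N is a normal subgroup of a non-abelian semi-direct product G = (Z/ℓZ)^a ⋊ Z/pZ whose index [G:N] is relatively prime to p, then N = G. -/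
/-!
The complement `Z/pZ` lies in `N`, because its elements have order dividing `p`, which is prime
to the index. It then remains to see that the commutators `σ(u) u⁻¹` with `σ = ι(1)` exhaust
`V = (Z/ℓZ)^a`, i.e. that `σ` fixes no nonzero vector. The fixed points of `⟨σ⟩` form a subgroup
of order `ℓ^k`, `k ≤ a`, and the orbit count of the `p`-group `⟨σ⟩` gives `ℓ^k ≡ ℓ^a ≡ 1 (mod p)`,
so `a = ord_p(ℓ)` divides `k`. Hence `k = a`, which makes `σ` trivial, or `k = 0`.
-/

theorem Subgroup.mem_of_pow_eq_one_of_coprime_index {G : Type*} [Group G] {N : Subgroup G}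
    [N.Normal] {p : ℕ} (hind : N.index.Coprime p) {g : G} (hg : g ^ p = 1) : g ∈ N := by
  rw [← QuotientGroup.eq_one_iff, ← pow_one (g : G ⧸ N), ← hind.gcd_eq_one, pow_gcd_eq_one]
  refine ⟨(QuotientGroup.eq_one_iff _).mpr (N.pow_index_mem g), ?_⟩
  rw [← QuotientGroup.mk_pow, hg, QuotientGroup.mk_one]

theorem fixedPoints_subgroup_eq_bot_or_eq_top {P V : Type*} [Group P] [Group V] [Finite V]
    [MulDistribMulAction P V] {p ℓ a : ℕ} [Fact p.Prime] [Fact ℓ.Prime] (hP : IsPGroup p P)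
    (hV : Nat.card V = ℓ ^ a) (ha : a = orderOf (ℓ : ZMod p)) :
    FixedPoints.subgroup P V = ⊥ ∨ FixedPoints.subgroup P V = ⊤ := by
  obtain ⟨k, hka, hk⟩ := (Nat.dvd_prime_pow Fact.out).mp
    (hV ▸ (FixedPoints.subgroup P V).card_subgroup_dvd_card)
  have hmod : ℓ ^ a ≡ ℓ ^ k [MOD p] := hV ▸ hk ▸ hP.card_modEq_card_fixedPoints V
  have hak : a ∣ k := by
    rw [ha, orderOf_dvd_iff_pow_eq_one, ← pow_orderOf_eq_one (ℓ : ZMod p), ← ha]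
    exact_mod_cast ((ZMod.natCast_eq_natCast_iff _ _ _).mpr hmod).symm
  obtain rfl | rfl : k = 0 ∨ k = a := by
    rcases Nat.eq_zero_or_pos k with h | h
    · exact .inl h
    · exact .inr (le_antisymm hka (Nat.le_of_dvd h hak))
  · exact .inl (Subgroup.eq_bot_of_card_eq _ (by simpa using hk))
  · exact .inr ((Subgroup.card_eq_iff_eq_top _).mp (hk.trans hV.symm))

namespace MulAut

theorem eq_one_of_apply_eq_self {V : Type*} [Group V] [Finite V] {p ℓ a : ℕ} [Fact p.Prime]
    [Fact ℓ.Prime] {σ : MulAut V} (hσ : orderOf σ = p) (hσ1 : σ ≠ 1)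
    (hV : Nat.card V = ℓ ^ a) (ha : a = orderOf (ℓ : ZMod p)) {v : V} (hv : σ v = v) :
    v = 1 := by
  have hP : IsPGroup p (Subgroup.zpowers σ) :=
    IsPGroup.of_card (n := 1) (by rw [Nat.card_zpowers, hσ, pow_one])
  have hfix : ∀ w : V, w ∈ FixedPoints.subgroup (Subgroup.zpowers σ) V ↔ σ w = w := fun w =>
    ⟨fun h => h ⟨σ, Subgroup.mem_zpowers σ⟩, fun h τ =>
      (Subgroup.zpowers_le.mpr (MulAction.mem_stabilizer_iff.mpr h) τ.2 : _)⟩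
  rcases fixedPoints_subgroup_eq_bot_or_eq_top hP hV ha with hbot | htop
  · rw [← Subgroup.mem_bot, ← hbot, hfix]
    exact hv
  · exact absurd (MulEquiv.ext fun w => (hfix w).mp (htop ▸ Subgroup.mem_top w)) hσ1

theorem exists_apply_div_eq {V : Type*} [CommGroup V] [Finite V] {σ : MulAut V}
    (hσ : ∀ v, σ v = v → v = 1) (w : V) : ∃ u, σ u / u = w := by
  suffices Function.Injective fun u => σ u / u from Finite.surjective_of_injective this w
  intro u u' h
  rw [← div_eq_one]
  refine hσ _ ?_
  rw [map_div, ← div_eq_div_iff_div_eq_div]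
  exact h

end MulAut

theorem SemidirectProduct.inl_apply_div_mem {V P : Type*} [Group V] [Group P]
    {φ : P →* MulAut V} {K : Subgroup (V ⋊[φ] P)} (hK : K.Normal) {g : P} (hg : inr g ∈ K)
    (u : V) : inl (φ g u / u) ∈ K := by
  rw [map_div, inl_aut, div_eq_mul_inv, mul_assoc, mul_assoc, ← mul_assoc _ (inr g⁻¹)]
  exact K.mul_mem hg (hK.conj_mem _ (by rw [map_inv]; exact K.inv_mem hg) _)

theorem stmt_8_general (p ℓ a : ℕ) [Fact p.Prime] [Fact ℓ.Prime]
    (ha : a = orderOf (ℓ : ZMod p))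
    (ι : Multiplicative (ZMod p) →* MulAut (Multiplicative (Fin a → ZMod ℓ)))
    (hι : Function.Injective ι)
    (N : Subgroup (Multiplicative (Fin a → ZMod ℓ) ⋊[ι] Multiplicative (ZMod p)))
    (hN : N.Normal) (hind : Nat.Coprime N.index p) :
    N = ⊤ := by
  have hinr (g : Multiplicative (ZMod p)) : SemidirectProduct.inr g ∈ N := by
    have hg : g ^ p = 1 := by simpa using pow_card_eq_one' (x := g)
    exact Subgroup.mem_of_pow_eq_one_of_coprime_index hind (by rw [← map_pow, hg, map_one])
  set σ := ι (Multiplicative.ofAdd 1)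
  have hσ : orderOf σ = p := by
    rw [orderOf_injective ι hι, orderOf_ofAdd_eq_addOrderOf, ZMod.addOrderOf_one]
  have hσ1 : σ ≠ 1 := fun h => (Fact.out : p.Prime).one_lt.ne' (by rw [← hσ, h, orderOf_one])
  have hV : Nat.card (Multiplicative (Fin a → ZMod ℓ)) = ℓ ^ a := by simp
  have hinl (w : Multiplicative (Fin a → ZMod ℓ)) : SemidirectProduct.inl w ∈ N := by
    obtain ⟨u, rfl⟩ := MulAut.exists_apply_div_eq
      (fun _ => MulAut.eq_one_of_apply_eq_self hσ hσ1 hV ha) w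
    exact SemidirectProduct.inl_apply_div_mem hN (hinr _) u
  rw [eq_top_iff]
  rintro x -
  rw [← SemidirectProduct.inl_left_mul_inr_right x]
  exact N.mul_mem (hinl _) (hinr _)

/-- For distinct primes `p ≠ ℓ` with `p ∣ |GL_a(F_ℓ)|` where `a = ord_p(ℓ)`: if `N` is a
normal subgroup of a non-abelian semidirect product `G = (Z/ℓZ)^a ⋊_ι Z/pZ` whose index
is relatively prime to `p`, then `N = G`. -/
theorem stmt_8 (p ℓ a : ℕ) [Fact p.Prime] [Fact ℓ.Prime] (hne : p ≠ ℓ)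
    (ha : a = orderOf (ℓ : ZMod p)) (hdvd : p ∣ Nat.card (GL (Fin a) (ZMod ℓ)))
    (ι : Multiplicative (ZMod p) →* MulAut (Multiplicative (Fin a → ZMod ℓ)))
    (hι : Function.Injective ι)
    (N : Subgroup (Multiplicative (Fin a → ZMod ℓ) ⋊[ι] Multiplicative (ZMod p)))
    (hN : N.Normal) (hind : Nat.Coprime N.index p) :
    N = ⊤ :=
  stmt_8_general p ℓ a ha ι hι N hN hind
end
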